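/- Let d be an even integer with d ≥ max(2, deg f) and let g := (1−x₁^d, …, 1−xₙ^d). Define z_{α,i} := α_i·|f_α|/d for α ∈ Δ(f), 1 ≤ i ≤ n, and λ_i := max(0, Σ_{α∈Δ(f)} z_{α,i} − f_{d,i}) for i = 1,…,n. Then λ ∈ [0,∞)ⁿ, the family z is G(λ)-feasible where G(λ) := f − Σ_{i=1}^n λ_i(1 − x_i^d), and G(λ)(0) − obj_{G(λ)}(z) = f(0) − Σ_i λ_i − obj_f(z) ≥ f_{tr,𝟙}, where 𝟙 = (1,…,1). -/

import Mathlib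

open MvPolynomial Finset

noncomputable section

/-- The weight `|α| = Σᵢ αᵢ` of a multi-exponent. -/
def wt {n : ℕ} (α : Fin n →₀ ℕ) : ℕ := α.sum fun _ e => e

/-- `Δ(f)`: exponents `α` with `|α| ≤ d`, `f_α ≠ 0`, `α ∉ {0, d·e₁, …, d·eₙ}`, and
`f_α x^α` not a square in `ℝ[x]` (equivalently `f_α < 0` or some `αᵢ` odd). -/
def Delta {n : ℕ} (d : ℕ) (f : MvPolynomial (Fin n) ℝ) : Finset (Fin n →₀ ℕ) :=
  f.support.filter fun α =>
    wt α ≤ d ∧ α ≠ 0 ∧ (∀ i, α ≠ Finsupp.single i d) ∧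
      (f.coeff α < 0 ∨ ∃ i, Odd (α i))

/-- `z` is an `h`-feasible family. -/
def Feasible {n : ℕ} (d : ℕ) (h : MvPolynomial (Fin n) ℝ)
    (z : (Fin n →₀ ℕ) → Fin n → ℝ) : Prop :=
  (∀ α ∈ Delta d h, ∀ i, 0 ≤ z α i ∧ (z α i = 0 ↔ α i = 0)) ∧
  (∀ i, ∑ α ∈ Delta d h, z α i ≤ h.coeff (Finsupp.single i d)) ∧
  (∀ α ∈ Delta d h, wt α = d →
    ∏ i ∈ univ.filter (fun i => 0 < α i), (z α i / (α i : ℝ)) ^ (α i) =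
      (h.coeff α / (d : ℝ)) ^ d)

/-- The objective value `obj_h(z)`. -/
def obj {n : ℕ} (d : ℕ) (h : MvPolynomial (Fin n) ℝ)
    (z : (Fin n →₀ ℕ) → Fin n → ℝ) : ℝ :=
  ∑ α ∈ (Delta d h).filter (fun α => wt α < d),
    ((d : ℝ) - (wt α : ℝ)) *
      ((h.coeff α / (d : ℝ)) ^ d *
        ∏ i ∈ univ.filter (fun i => 0 < α i), ((α i : ℝ) / z α i) ^ (α i)) ^
        ((1 : ℝ) / ((d : ℝ) - (wt α : ℝ)))

/-- `ρ(h) = inf { obj_h(z) : z h-feasible }`, `+∞` if infeasible. -/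
def rho {n : ℕ} (d : ℕ) (h : MvPolynomial (Fin n) ℝ) : EReal :=
  sInf {r : EReal | ∃ z, Feasible d h z ∧ r = ((obj d h z : ℝ) : EReal)}

/-- `h_gp = h(0) - ρ(h)`. -/
def gp {n : ℕ} (d : ℕ) (h : MvPolynomial (Fin n) ℝ) : EReal :=
  ((h.coeff 0 : ℝ) : EReal) - rho d h

/-- `s(f,g) = sup { G(λ)_gp : λ ∈ [0,∞)^m }` where `G(λ) = f - Σ λⱼ gⱼ`. -/
def sBound {n m : ℕ} (d : ℕ) (f : MvPolynomial (Fin n) ℝ)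
    (g : Fin m → MvPolynomial (Fin n) ℝ) : EReal :=
  sSup {r : EReal | ∃ lam : Fin m → ℝ, (∀ j, 0 ≤ lam j) ∧
    r = gp d (f - ∑ j, C (lam j) * g j)}

/-- `Δ'(f)`: nonzero exponents `α` with `f_α ≠ 0` and `f_α x^α` not a square. -/
def Delta' {n : ℕ} (f : MvPolynomial (Fin n) ℝ) : Finset (Fin n →₀ ℕ) :=
  f.support.filter fun α => α ≠ 0 ∧ (f.coeff α < 0 ∨ ∃ i, Odd (α i))

/-- The trivial bound `f_{tr,N} = f(0) - Σ_{α ∈ Δ'(f)} |f_α| N^α`. -/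
def trivialBound {n : ℕ} (f : MvPolynomial (Fin n) ℝ) (N : Fin n → ℝ) : ℝ :=
  f.coeff 0 - ∑ α ∈ Delta' f, |f.coeff α| * ∏ i, N i ^ (α i)


lemma wt_eq {n : ℕ} (α : Fin n →₀ ℕ) : wt α = ∑ i, α i :=
  Finsupp.sum_fintype _ _ (fun _ => rfl)

lemma sum_filter_pos {n : ℕ} (α : Fin n →₀ ℕ) :
    ∑ i ∈ univ.filter (fun i => 0 < α i), α i = wt α := by
  rw [wt_eq]
  exact Finset.sum_filter_of_ne (fun i _ h => Nat.pos_of_ne_zero h)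

lemma prod_const_pow {n : ℕ} (α : Fin n →₀ ℕ) (c : ℝ) :
    ∏ i ∈ univ.filter (fun i => 0 < α i), c ^ (α i) = c ^ (wt α) := by
  rw [Finset.prod_pow_eq_pow_sum, sum_filter_pos]

lemma coeffGG {n d : ℕ} (f : MvPolynomial (Fin n) ℝ) (lam : Fin n → ℝ) (m : Fin n →₀ ℕ) :
    (f - ∑ i, C (lam i) * (1 - X i ^ d)).coeff m =
      f.coeff m - ∑ i, lam i *
        ((if (0 : Fin n →₀ ℕ) = m then (1:ℝ) else 0) - (if Finsupp.single i d = m then 1 else 0)) := by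
  simp [coeff_sum, coeff_sub, coeff_C_mul, coeff_X_pow, coeff_one]

lemma coeffG_ne {n d : ℕ} (f : MvPolynomial (Fin n) ℝ) (lam : Fin n → ℝ) (m : Fin n →₀ ℕ)
    (h0 : m ≠ 0) (hs : ∀ i, m ≠ Finsupp.single i d) :
    (f - ∑ i, C (lam i) * (1 - X i ^ d)).coeff m = f.coeff m := by
  rw [coeffGG]
  have : ∀ i : Fin n, ((if (0 : Fin n →₀ ℕ) = m then (1:ℝ) else 0) - (if Finsupp.single i d = m then 1 else 0)) = 0 := by
    intro i
    rw [if_neg (fun h => h0 h.symm), if_neg (fun h => hs i h.symm)]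
    ring
  simp [this]

lemma coeffG_zero {n d : ℕ} (hd : d ≠ 0) (f : MvPolynomial (Fin n) ℝ) (lam : Fin n → ℝ) :
    (f - ∑ i, C (lam i) * (1 - X i ^ d)).coeff 0 = f.coeff 0 - ∑ i, lam i := by
  rw [coeffGG]
  have : ∀ i : Fin n, ((if (0 : Fin n →₀ ℕ) = (0 : Fin n →₀ ℕ) then (1:ℝ) else 0) - (if Finsupp.single i d = 0 then 1 else 0)) = 1 := by
    intro i
    rw [if_pos rfl, if_neg (by simp [Finsupp.single_eq_zero, hd])]
    ring
  simp [this, hd]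

lemma coeffG_single {n d : ℕ} (hd : d ≠ 0) (f : MvPolynomial (Fin n) ℝ) (lam : Fin n → ℝ) (j : Fin n) :
    (f - ∑ i, C (lam i) * (1 - X i ^ d)).coeff (Finsupp.single j d) =
      f.coeff (Finsupp.single j d) + lam j := by
  rw [coeffGG]
  have h0 : ((0: Fin n →₀ ℕ) = Finsupp.single j d) = False := by
    simp [eq_comm, Finsupp.single_eq_zero, hd]
  have key : ∀ i : Fin n, (Finsupp.single i d = Finsupp.single j d) ↔ i = j := by
    intro i
    constructor
    · intro h
      rcases (Finsupp.single_eq_single_iff _ _ _ _).mp h with ⟨h1,_⟩|⟨h1,_⟩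
      · exact h1
      · exact absurd h1 hd
    · rintro rfl; rfl
  rw [Finset.sum_eq_single j]
  · rw [if_neg (by simp [h0]), if_pos rfl]; ring
  · intro i _ hij
    rw [if_neg (by simp [h0]), if_neg (fun h => hij ((key i).mp h))]
    ring
  · simp

lemma Delta_G_eq {n d : ℕ} (f : MvPolynomial (Fin n) ℝ) (lam : Fin n → ℝ) :
    Delta d (f - ∑ i, C (lam i) * (1 - X i ^ d)) = Delta d f := by
  ext α
  simp only [Delta, mem_filter, mem_support_iff]
  constructor
  · rintro ⟨h1, h2, h3, h4, h5⟩
    rw [coeffG_ne f lam α h3 h4] at h1 h5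
    exact ⟨h1, h2, h3, h4, h5⟩
  · rintro ⟨h1, h2, h3, h4, h5⟩
    refine ⟨?_, h2, h3, h4, ?_⟩ <;> rw [coeffG_ne f lam α h3 h4] <;> assumption

lemma obj_G_eq {n d : ℕ} (f : MvPolynomial (Fin n) ℝ) (lam : Fin n → ℝ)
    (z : (Fin n →₀ ℕ) → Fin n → ℝ) :
    obj d (f - ∑ i, C (lam i) * (1 - X i ^ d)) z = obj d f z := by
  unfold obj
  rw [Delta_G_eq]
  refine Finset.sum_congr rfl fun α hα => ?_
  simp only [mem_filter, Delta, mem_support_iff] at hα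
  rw [coeffG_ne f lam α hα.1.2.2.1 hα.1.2.2.2.1]

lemma obj_val {n d : ℕ} (hd2 : 2 ≤ d) (hdeven : Even d) (f : MvPolynomial (Fin n) ℝ)
    (z : (Fin n →₀ ℕ) → Fin n → ℝ)
    (hzdef : ∀ α, ∀ i, z α i = (α i : ℝ) * |f.coeff α| / d) :
    obj d f z = ∑ α ∈ (Delta d f).filter (fun α => wt α < d),
      (((d : ℝ) - (wt α : ℝ)) / d) * |f.coeff α| := by
  have hd0 : (d:ℝ) ≠ 0 := by positivity
  refine Finset.sum_congr rfl fun α hα => ?_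
  simp only [mem_filter, Delta, mem_support_iff] at hα
  obtain ⟨⟨hfα, -, -, -, -⟩, hwt⟩ := hα
  have habs : (0:ℝ) < |f.coeff α| := abs_pos.mpr hfα
  have hx : (0:ℝ) < |f.coeff α| / d := by positivity
  have hprod : ∏ i ∈ univ.filter (fun i => 0 < α i), ((α i : ℝ) / z α i) ^ (α i)
      = ((d:ℝ) / |f.coeff α|) ^ (wt α) := by
    rw [← prod_const_pow α]
    refine Finset.prod_congr rfl fun i hi => ?_
    simp only [mem_filter] at hi
    have hai : ((α i : ℝ)) ≠ 0 := Nat.cast_ne_zero.mpr hi.2.ne'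
    rw [hzdef]
    field_simp
  have hpow : (f.coeff α / (d : ℝ)) ^ d = (|f.coeff α| / d) ^ d := by
    rw [← hdeven.pow_abs (f.coeff α / d), abs_div, abs_of_pos (by positivity : (0:ℝ) < (d:ℝ))]
  have hinner : (f.coeff α / (d : ℝ)) ^ d *
      ∏ i ∈ univ.filter (fun i => 0 < α i), ((α i : ℝ) / z α i) ^ (α i)
      = (|f.coeff α| / d) ^ (d - wt α) := by
    rw [hprod, hpow]
    have : ((d:ℝ) / |f.coeff α|) = (|f.coeff α| / d)⁻¹ := by
      rw [inv_div]
    rw [this, inv_pow, pow_sub₀ _ hx.ne' hwt.le, div_eq_mul_inv]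
  rw [hinner]
  have hk : 0 < d - wt α := Nat.sub_pos_of_lt hwt
  have hcast : ((d : ℝ) - (wt α : ℝ)) = ((d - wt α : ℕ) : ℝ) := by
    rw [Nat.cast_sub hwt.le]
  rw [hcast, ← Real.rpow_natCast (|f.coeff α| / d) (d - wt α), ← Real.rpow_mul hx.le,
    mul_one_div, div_self (by exact_mod_cast hk.ne' : ((d - wt α : ℕ):ℝ) ≠ 0), Real.rpow_one]
  rw [Nat.cast_sub hwt.le]
  ring

/-- the explicit choice `z_{α,i} = αᵢ|f_α|/d`,
`λᵢ = max(0, Σ_α z_{α,i} - f_{d,i})` is `G(λ)`-feasible and gives a bound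
at least the trivial bound `f_{tr,𝟙}`. -/
theorem stmt_12 (n d : ℕ) (hd2 : 2 ≤ d) (hdeven : Even d)
    (f : MvPolynomial (Fin n) ℝ) (hf : f.totalDegree ≤ d)
    (z : (Fin n →₀ ℕ) → Fin n → ℝ)
    (hzdef : ∀ α, ∀ i, z α i = (α i : ℝ) * |f.coeff α| / d)
    (lam : Fin n → ℝ)
    (hlamdef : ∀ i, lam i =
      max 0 ((∑ α ∈ Delta d f, z α i) - f.coeff (Finsupp.single i d))) :
    (∀ i, 0 ≤ lam i) ∧
    Feasible d (f - ∑ i, C (lam i) * (1 - X i ^ d)) z ∧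
    (f - ∑ i, C (lam i) * (1 - X i ^ d)).coeff 0 -
        obj d (f - ∑ i, C (lam i) * (1 - X i ^ d)) z =
      f.coeff 0 - (∑ i, lam i) - obj d f z ∧
    trivialBound f (fun _ => 1) ≤ f.coeff 0 - (∑ i, lam i) - obj d f z := by
  have hd0 : d ≠ 0 := by omega
  have hdR : (0:ℝ) < d := by exact_mod_cast Nat.pos_of_ne_zero hd0
  have hΔ : Delta d (f - ∑ i, C (lam i) * (1 - X i ^ d)) = Delta d f := Delta_G_eq f lam
  have hlam0 : ∀ i, 0 ≤ lam i := fun i => (hlamdef i) ▸ le_max_left 0 _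
  have hznn : ∀ α i, 0 ≤ z α i := fun α i => by rw [hzdef]; positivity
  refine ⟨hlam0, ⟨?_, ?_, ?_⟩, ?_, ?_⟩
  · intro α hα i
    rw [hΔ] at hα
    simp only [Delta, mem_filter, mem_support_iff] at hα
    have habs : (0:ℝ) < |f.coeff α| := abs_pos.mpr hα.1
    refine ⟨hznn α i, ?_⟩
    rw [hzdef]
    constructor
    · intro h
      rcases mul_eq_zero.mp ((div_eq_zero_iff.mp h).resolve_right hdR.ne') with h|h
      · exact_mod_cast h
      · exact absurd h habs.ne'
    · intro h; rw [h]; simp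
  · intro i
    rw [hΔ, coeffG_single hd0, hlamdef i]
    linarith [le_max_right 0 ((∑ α ∈ Delta d f, z α i) - f.coeff (Finsupp.single i d))]
  · intro α hα hwtd
    rw [hΔ] at hα
    simp only [Delta, mem_filter, mem_support_iff] at hα
    obtain ⟨hfα, -, h3, h4, -⟩ := hα
    rw [coeffG_ne f lam α h3 h4]
    have habs : (0:ℝ) < |f.coeff α| := abs_pos.mpr hfα
    have hp : ∏ i ∈ univ.filter (fun i => 0 < α i), (z α i / (α i:ℝ)) ^ α i
        = (|f.coeff α|/d) ^ wt α := by
      rw [← prod_const_pow α]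
      refine Finset.prod_congr rfl fun i hi => ?_
      simp only [mem_filter] at hi
      have hai : ((α i:ℝ)) ≠ 0 := Nat.cast_ne_zero.mpr hi.2.ne'
      rw [hzdef]
      field_simp
    rw [hp, hwtd, ← hdeven.pow_abs (f.coeff α / d), abs_div, abs_of_pos hdR]
  · rw [coeffG_zero hd0, obj_G_eq]
  · have hobj := obj_val hd2 hdeven f z hzdef
    have htb : trivialBound f (fun _ => 1) = f.coeff 0 - ∑ α ∈ Delta' f, |f.coeff α| := by
      simp [trivialBound]
    rw [htb]
    have key : (∑ i, lam i) + obj d f z ≤ ∑ α ∈ Delta' f, |f.coeff α| := by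
      set T : Finset (Fin n) := univ.filter (fun i => f.coeff (Finsupp.single i d) < 0) with hT
      have hlam_le : ∀ i, lam i ≤ (∑ α ∈ Delta d f, z α i)
          + max 0 (-(f.coeff (Finsupp.single i d))) := by
        intro i
        rw [hlamdef i]
        have hS : 0 ≤ ∑ α ∈ Delta d f, z α i := Finset.sum_nonneg fun α _ => hznn α i
        refine max_le (add_nonneg hS (le_max_left 0 _)) ?_
        linarith [le_max_right 0 (-(f.coeff (Finsupp.single i d)))]
      have h1 : ∑ i, lam i ≤ (∑ i, ∑ α ∈ Delta d f, z α i)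
          + ∑ i, max 0 (-(f.coeff (Finsupp.single i d))) := by
        rw [← Finset.sum_add_distrib]
        exact Finset.sum_le_sum fun i _ => hlam_le i
      have h2 : ∑ i, ∑ α ∈ Delta d f, z α i
          = ∑ α ∈ Delta d f, ((wt α : ℝ)/d) * |f.coeff α| := by
        rw [Finset.sum_comm]
        refine Finset.sum_congr rfl fun α _ => ?_
        simp only [hzdef]
        rw [← Finset.sum_div, ← Finset.sum_mul]
        have : (∑ i, ((α i : ℝ))) = (wt α : ℝ) := by
          rw [wt_eq]; push_cast; rfl
        rw [this]; ring
      have h3 : ∑ i, max 0 (-(f.coeff (Finsupp.single i d)))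
          = ∑ i ∈ T, |f.coeff (Finsupp.single i d)| := by
        have e1 : ∑ i, max 0 (-(f.coeff (Finsupp.single i d)))
            = ∑ i ∈ T, max 0 (-(f.coeff (Finsupp.single i d))) :=
          (Finset.sum_subset (Finset.subset_univ T) (fun i _ hi =>
            max_eq_left (neg_nonpos.mpr (not_lt.mp (by simpa [hT] using hi))))).symm
        rw [e1]
        refine Finset.sum_congr rfl fun i hi => ?_
        have hci : f.coeff (Finsupp.single i d) < 0 := by simpa [hT] using hi
        rw [max_eq_right (by linarith), abs_of_neg hci]
      have h4 : ∑ i ∈ T, |f.coeff (Finsupp.single i d)|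
          = ∑ β ∈ T.image (fun i => Finsupp.single i d), |f.coeff β| := by
        have hinj : ∀ i ∈ T, ∀ j ∈ T,
            (fun i => Finsupp.single i d) i = (fun i => Finsupp.single i d) j → i = j := by
          intro i _ j _ h
          rcases (Finsupp.single_eq_single_iff _ _ _ _).mp h with ⟨h1,-⟩|⟨h1,-⟩
          · exact h1
          · exact absurd h1 hd0
        rw [Finset.sum_image hinj]
      have hobj_le : obj d f z ≤ ∑ α ∈ Delta d f, (((d:ℝ) - wt α)/d) * |f.coeff α| := by
        rw [hobj]
        refine Finset.sum_le_sum_of_subset_of_nonneg (Finset.filter_subset _ _)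
          fun α hα _ => ?_
        have hwtle : wt α ≤ d := by
          simp only [Delta, mem_filter] at hα; exact hα.2.1
        have hnn : (0:ℝ) ≤ (d:ℝ) - wt α := by
          have : (wt α : ℝ) ≤ d := by exact_mod_cast hwtle
          linarith
        exact mul_nonneg (div_nonneg hnn hdR.le) (abs_nonneg _)
      have h5 : (∑ α ∈ Delta d f, ((wt α:ℝ)/d) * |f.coeff α|)
          + (∑ α ∈ Delta d f, (((d:ℝ)-wt α)/d) * |f.coeff α|)
          = ∑ α ∈ Delta d f, |f.coeff α| := by
        rw [← Finset.sum_add_distrib]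
        refine Finset.sum_congr rfl fun α _ => ?_
        field_simp
        ring
      have hdisj : Disjoint (Delta d f) (T.image (fun i => Finsupp.single i d)) := by
        rw [Finset.disjoint_right]
        intro β hβT hβΔ
        simp only [mem_image] at hβT
        obtain ⟨i, -, rfl⟩ := hβT
        simp only [Delta, mem_filter] at hβΔ
        exact hβΔ.2.2.2.1 i rfl
      have hsub : Delta d f ∪ T.image (fun i => Finsupp.single i d) ⊆ Delta' f := by
        intro β hβ
        rcases Finset.mem_union.mp hβ with h|h
        · simp only [Delta, Delta', mem_filter, mem_support_iff] at h ⊢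
          tauto
        · simp only [mem_image] at h
          obtain ⟨i, hiT, rfl⟩ := h
          have hci : f.coeff (Finsupp.single i d) < 0 := by simpa [hT] using hiT
          simp only [Delta', mem_filter, mem_support_iff]
          exact ⟨hci.ne, by simp [Finsupp.single_eq_zero, hd0], Or.inl hci⟩
      have h6 : ∑ β ∈ Delta d f ∪ T.image (fun i => Finsupp.single i d), |f.coeff β|
          ≤ ∑ α ∈ Delta' f, |f.coeff α| :=
        Finset.sum_le_sum_of_subset_of_nonneg hsub (fun _ _ _ => abs_nonneg _)
      rw [Finset.sum_union hdisj] at h6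
      linarith
    linarith
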